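/- arXiv:2508.16108 — 8 statements merged into one kernel-verified Lean document; each statement's English description precedes it below -/
import Mathlib

section
/- Let φ be a positive C² solution of -φ'' - 2s·m'(x)·φ' + c(x)·φ = λ·φ on [-1,1] with φ'(y₀) = 0, and suppose y₀ < 1, x₊ ∈ (y₀, 1), and c(t) < λ for almost every t ∈ (y₀, x₊). Then φ'(x) < 0 for all x ∈ (y₀, x₊]. -/
open Set Real MeasureTheory

theorem stmt3 (φ φ' φ'' m m' c : ℝ → ℝ) (s lam y₀ xp : ℝ)
    (hφ : ∀ x ∈ Icc (-1:ℝ) 1, HasDerivAt φ (φ' x) x)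
    (hφ' : ∀ x ∈ Icc (-1:ℝ) 1, HasDerivAt φ' (φ'' x) x)
    (hφ''c : ContinuousOn φ'' (Icc (-1:ℝ) 1))
    (hm : ∀ x ∈ Icc (-1:ℝ) 1, HasDerivAt m (m' x) x)
    (hm'c : ContinuousOn m' (Icc (-1:ℝ) 1))
    (hc : ContinuousOn c (Icc (-1:ℝ) 1))
    (hpos : ∀ x ∈ Icc (-1:ℝ) 1, 0 < φ x)
    (hode : ∀ x ∈ Icc (-1:ℝ) 1,
      -φ'' x - 2 * s * m' x * φ' x + c x * φ x = lam * φ x)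
    (hy₀ : y₀ ∈ Ico (-1:ℝ) 1) (hcrit : φ' y₀ = 0)
    (hxp : xp ∈ Ioo y₀ 1)
    (hcl : ∀ᵐ t ∂(volume.restrict (Ioo y₀ xp)), c t < lam) :
    ∀ x ∈ Ioc y₀ xp, φ' x < 0 := by
  intro x hx
  have hy₀I : y₀ ∈ Icc (-1:ℝ) 1 := ⟨hy₀.1, hy₀.2.le⟩
  have hxI : x ∈ Icc (-1:ℝ) 1 :=
    ⟨le_trans hy₀.1 (le_of_lt hx.1), le_trans hx.2 hxp.2.le⟩
  set g : ℝ → ℝ := fun t => Real.exp (2 * s * m t) * φ' t with hg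
  set h : ℝ → ℝ := fun t => Real.exp (2 * s * m t) * ((c t - lam) * φ t) with hh
  -- derivative of g
  have hgd : ∀ t ∈ Icc (-1:ℝ) 1, HasDerivAt g (h t) t := by
    intro t ht
    have he : HasDerivAt (fun t => Real.exp (2 * s * m t))
        (Real.exp (2 * s * m t) * (2 * s * m' t)) t := by
      have := ((hm t ht).const_mul (2 * s)).exp
      simpa [mul_comm] using this
    have : HasDerivAt (fun y => Real.exp (2 * s * m y) * φ' y)
        (Real.exp (2 * s * m t) * (2 * s * m' t) * φ' t + Real.exp (2 * s * m t) * φ'' t) t :=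
      he.mul (hφ' t ht)
    have hode' := hode t ht
    have hode2 : φ'' t = (c t - lam) * φ t - 2 * s * m' t * φ' t := by linarith
    convert this using 1
    rw [hode2]
    simp only [hh]
    ring
  -- continuity of h on Icc
  have hmc : ContinuousOn m (Icc (-1:ℝ) 1) := fun t ht =>
    (hm t ht).continuousAt.continuousWithinAt
  have hφc : ContinuousOn φ (Icc (-1:ℝ) 1) := fun t ht =>
    (hφ t ht).continuousAt.continuousWithinAt
  have hhc : ContinuousOn h (Icc (-1:ℝ) 1) :=
    ((hmc.const_smul (2*s)).rexp).mul (((hc.sub continuousOn_const)).mul hφc)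
  have huIcc : uIcc y₀ x ⊆ Icc (-1:ℝ) 1 := by
    rw [uIcc_of_le hx.1.le]
    exact fun t ht => ⟨le_trans hy₀I.1 ht.1, le_trans ht.2 hxI.2⟩
  have hint : IntervalIntegrable h volume y₀ x :=
    (hhc.mono huIcc).intervalIntegrable
  have hftc : ∫ t in y₀..x, h t = g x - g y₀ :=
    intervalIntegral.integral_eq_sub_of_hasDerivAt
      (fun t ht => hgd t (huIcc ht)) hint
  -- the integral is negative
  have hIoosub : Ioo y₀ x ⊆ Ioo y₀ xp := Ioo_subset_Ioo le_rfl hx.2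
  have haepos : ∀ᵐ t ∂(volume.restrict (Ioo y₀ x)), 0 < -h t := by
    have h1 : ∀ᵐ t ∂(volume.restrict (Ioo y₀ x)), c t < lam :=
      ae_restrict_of_ae_restrict_of_subset hIoosub hcl
    have h2 : ∀ᵐ t ∂(volume.restrict (Ioo y₀ x)), t ∈ Ioo y₀ x :=
      ae_restrict_mem measurableSet_Ioo
    filter_upwards [h1, h2] with t hcl' ht
    have htI : t ∈ Icc (-1:ℝ) 1 :=
      ⟨le_trans hy₀I.1 ht.1.le, le_trans ht.2.le hxI.2⟩
    have := hpos t htI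
    have := Real.exp_pos (2 * s * m t)
    have h3 : 0 < (lam - c t) * φ t := mul_pos (by linarith) ‹0 < φ t›
    have h4 : 0 < Real.exp (2 * s * m t) * ((lam - c t) * φ t) := mul_pos ‹_› h3
    simp only [hh]
    nlinarith
  have hsubIcc : Icc y₀ x ⊆ Icc (-1:ℝ) 1 :=
    fun t ht => ⟨le_trans hy₀I.1 ht.1, le_trans ht.2 hxI.2⟩
  have hInt : IntegrableOn (fun t => -h t) (Ioo y₀ x) volume :=
    (((hhc.mono hsubIcc).integrableOn_Icc).mono_set Ioo_subset_Icc_self).neg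
  have hmeaspos : 0 < volume ((Function.support fun t => -h t) ∩ Ioo y₀ x) := by
    have hsub : (Ioo y₀ x : Set ℝ) ≤ᵐ[volume]
        (((Function.support fun t => -h t) ∩ Ioo y₀ x : Set ℝ)) := by
      have := (ae_restrict_iff' measurableSet_Ioo).mp haepos
      filter_upwards [this] with t ht hmem
      exact ⟨(ht hmem).ne', hmem⟩
    calc (0:ENNReal) < volume (Ioo y₀ x) := by
          simp [Real.volume_Ioo, hx.1]
      _ ≤ _ := measure_mono_ae hsub
  have hposint : 0 < ∫ t in Ioo y₀ x, -h t := by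
    rw [setIntegral_pos_iff_support_of_nonneg_ae (haepos.mono fun t ht => ht.le) hInt]
    exact hmeaspos
  have hIneg : ∫ t in y₀..x, h t < 0 := by
    rw [intervalIntegral.integral_of_le hx.1.le,
      MeasureTheory.integral_Ioc_eq_integral_Ioo]
    have : ∫ t in Ioo y₀ x, -h t = -∫ t in Ioo y₀ x, h t := integral_neg _
    linarith [hposint, this ▸ hposint]
  have hgy₀ : g y₀ = 0 := by simp [hg, hcrit]
  have hgx : g x < 0 := by linarith [hftc ▸ hIneg]
  have := Real.exp_pos (2 * s * m x)
  simp only [hg] at hgx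
  nlinarith
end

section
/- Let φ be a positive C² solution of -φ'' - 2s·m'(x)·φ' + c(x)·φ = λ·φ on [-1,1] with φ'(y₀) = 0, and suppose -1 < y₀, x₋ ∈ (-1, y₀), and c(t) > λ for almost every t ∈ (x₋, y₀). Then φ'(x) < 0 for all x ∈ [x₋, y₀). -/
open Set Real MeasureTheory

theorem stmt4 (φ φ' φ'' m m' c : ℝ → ℝ) (s lam y₀ xm : ℝ)
    (hφ : ∀ x ∈ Icc (-1:ℝ) 1, HasDerivAt φ (φ' x) x)
    (hφ' : ∀ x ∈ Icc (-1:ℝ) 1, HasDerivAt φ' (φ'' x) x)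
    (hφ''c : ContinuousOn φ'' (Icc (-1:ℝ) 1))
    (hm : ∀ x ∈ Icc (-1:ℝ) 1, HasDerivAt m (m' x) x)
    (hm'c : ContinuousOn m' (Icc (-1:ℝ) 1))
    (hc : ContinuousOn c (Icc (-1:ℝ) 1))
    (hpos : ∀ x ∈ Icc (-1:ℝ) 1, 0 < φ x)
    (hode : ∀ x ∈ Icc (-1:ℝ) 1,
      -φ'' x - 2 * s * m' x * φ' x + c x * φ x = lam * φ x)
    (hy₀ : y₀ ∈ Ioc (-1:ℝ) 1) (hcrit : φ' y₀ = 0)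
    (hxm : xm ∈ Ioo (-1:ℝ) y₀)
    (hcg : ∀ᵐ t ∂(volume.restrict (Ioo xm y₀)), lam < c t) :
    ∀ x ∈ Ico xm y₀, φ' x < 0 := by
  intro x hx
  set w : ℝ → ℝ := fun t => Real.exp (2 * s * m t) * φ' t with hw
  set g : ℝ → ℝ := fun t => Real.exp (2 * s * m t) * ((c t - lam) * φ t) with hg
  -- derivative of w
  have hwderiv : ∀ t ∈ Icc (-1:ℝ) 1, HasDerivAt w (g t) t := by
    intro t ht
    have h1 : HasDerivAt (fun t => Real.exp (2 * s * m t))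
        (Real.exp (2 * s * m t) * (2 * s * m' t)) t :=
      (((hm t ht).const_mul (2 * s)).exp)
    have h2 := h1.mul (hφ' t ht)
    have hodet := hode t ht
    have heq : Real.exp (2 * s * m t) * (2 * s * m' t) * φ' t
        + Real.exp (2 * s * m t) * φ'' t = g t := by
      have h3 : φ'' t + 2 * s * m' t * φ' t = (c t - lam) * φ t := by linarith
      simp only [hg]
      rw [← h3]; ring
    rw [heq] at h2
    exact h2
  -- continuity facts
  have hmc : ContinuousOn m (Icc (-1:ℝ) 1) :=
    fun t ht => ((hm t ht).continuousAt).continuousWithinAt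
  have hφc : ContinuousOn φ (Icc (-1:ℝ) 1) :=
    fun t ht => ((hφ t ht).continuousAt).continuousWithinAt
  have hgc : ContinuousOn g (Icc (-1:ℝ) 1) := by
    apply ContinuousOn.mul
    · exact Real.continuous_exp.comp_continuousOn (continuousOn_const.mul hmc)
    · exact (hc.sub continuousOn_const).mul hφc
  obtain ⟨hxm1, hxy⟩ := hx
  have hxmlt : -1 < xm := hxm.1
  have hy1 : y₀ ≤ 1 := hy₀.2
  have hxI : x ∈ Icc (-1:ℝ) 1 := ⟨by linarith, by linarith⟩
  have hsub : Icc x y₀ ⊆ Icc (-1:ℝ) 1 := fun t ht => ⟨by linarith [ht.1], by linarith [ht.2]⟩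
  have hxley : x ≤ y₀ := le_of_lt hxy
  -- FTC
  have hint : IntervalIntegrable g volume x y₀ := by
    apply ContinuousOn.intervalIntegrable
    rw [uIcc_of_le hxley]
    exact hgc.mono hsub
  have hftc : ∫ t in x..y₀, g t = w y₀ - w x := by
    apply intervalIntegral.integral_eq_sub_of_hasDerivAt _ hint
    intro t ht
    rw [uIcc_of_le hxley] at ht
    exact hwderiv t (hsub ht)
  -- a.e. positivity of g on Ioo x y₀
  have hsub' : Ioo x y₀ ⊆ Ioo xm y₀ := Ioo_subset_Ioo hxm1 le_rfl
  have hcg' : ∀ᵐ t ∂(volume.restrict (Ioo x y₀)), lam < c t :=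
    ae_mono (Measure.restrict_mono hsub' le_rfl) hcg
  have hgpos : ∀ᵐ t ∂(volume.restrict (Ioo x y₀)), 0 < g t := by
    filter_upwards [hcg', ae_restrict_mem measurableSet_Ioo] with t hlt ht
    have htI : t ∈ Icc (-1:ℝ) 1 := hsub (Ioo_subset_Icc_self ht)
    have hφt := hpos t htI
    have h4 : 0 < c t - lam := by linarith
    simp only [hg]
    exact mul_pos (Real.exp_pos _) (mul_pos h4 hφt)
  -- the integral over Ioo is positive
  have hpos_int : 0 < ∫ t in Ioo x y₀, g t := by
    have hig : IntegrableOn g (Ioo x y₀) volume :=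
      (((hgc.mono hsub).integrableOn_compact isCompact_Icc).mono_set Ioo_subset_Icc_self)
    have hnn : 0 ≤ᵐ[volume.restrict (Ioo x y₀)] g :=
      hgpos.mono fun t ht => le_of_lt ht
    rw [setIntegral_pos_iff_support_of_nonneg_ae hnn hig]
    have h0 : volume ((Function.support g)ᶜ ∩ Ioo x y₀) = 0 := by
      have hsupp : ∀ᵐ t ∂(volume.restrict (Ioo x y₀)), t ∈ Function.support g :=
        hgpos.mono fun t ht => ne_of_gt ht
      have h5 := hsupp
      rw [Filter.eventually_iff, mem_ae_iff, Measure.restrict_apply' measurableSet_Ioo] at h5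
      exact h5
    have hle := measure_le_inter_add_diff volume (Ioo x y₀) (Function.support g)
    have hdiff : Ioo x y₀ \ Function.support g = (Function.support g)ᶜ ∩ Ioo x y₀ := by
      rw [Set.diff_eq, Set.inter_comm]
    rw [hdiff, h0, add_zero] at hle
    have hIoo : 0 < volume (Ioo x y₀) := by
      rw [Real.volume_Ioo]
      simp [hxy]
    calc (0:ENNReal) < volume (Ioo x y₀) := hIoo
      _ ≤ volume (Ioo x y₀ ∩ Function.support g) := hle
      _ = volume (Function.support g ∩ Ioo x y₀) := by rw [Set.inter_comm]
  -- assemble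
  have hioc : ∫ t in x..y₀, g t = ∫ t in Ioo x y₀, g t := by
    rw [intervalIntegral.integral_of_le hxley, MeasureTheory.integral_Ioc_eq_integral_Ioo]
  have hwy : w y₀ = 0 := by simp [hw, hcrit]
  have hwx : w x < 0 := by
    have : 0 < w y₀ - w x := by rw [← hftc, hioc]; exact hpos_int
    linarith [hwy ▸ this]
  have hexp := Real.exp_pos (2 * s * m x)
  have hwx' : Real.exp (2 * s * m x) * φ' x < 0 := hwx
  by_contra h
  push_neg at h
  nlinarith [mul_nonneg hexp.le h]
end

section
/- Let φ be a positive C² solution of -φ'' - 2s·m'(x)·φ' + c(x)·φ = λ·φ on [-1,1] with φ'(-1) = φ'(1) = 0, and suppose there exists a unique x₁ ∈ (-1,1) with c < λ on (-1, x₁) and c > λ on (x₁, 1) (strict inequalities except on a null set). Then φ'(x) < 0 for all x ∈ (-1, 1), i.e., φ is strictly decreasing on [-1,1]. -/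
open Set Real MeasureTheory

theorem stmt5 (φ φ' φ'' m m' c : ℝ → ℝ) (s lam x₁ : ℝ)
    (hφ : ∀ x ∈ Icc (-1:ℝ) 1, HasDerivAt φ (φ' x) x)
    (hφ' : ∀ x ∈ Icc (-1:ℝ) 1, HasDerivAt φ' (φ'' x) x)
    (hφ''c : ContinuousOn φ'' (Icc (-1:ℝ) 1))
    (hm : ∀ x ∈ Icc (-1:ℝ) 1, HasDerivAt m (m' x) x)
    (hm'c : ContinuousOn m' (Icc (-1:ℝ) 1))
    (hc : ContinuousOn c (Icc (-1:ℝ) 1))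
    (hpos : ∀ x ∈ Icc (-1:ℝ) 1, 0 < φ x)
    (hode : ∀ x ∈ Icc (-1:ℝ) 1,
      -φ'' x - 2 * s * m' x * φ' x + c x * φ x = lam * φ x)
    (hNeu₁ : φ' (-1) = 0) (hNeu₂ : φ' 1 = 0)
    (hx₁ : x₁ ∈ Ioo (-1:ℝ) 1)
    (hbelow : ∀ᵐ t ∂(volume.restrict (Ioo (-1:ℝ) x₁)), c t < lam)
    (habove : ∀ᵐ t ∂(volume.restrict (Ioo x₁ (1:ℝ))), lam < c t) :
    (∀ x ∈ Ioo (-1:ℝ) 1, φ' x < 0) ∧ StrictAntiOn φ (Icc (-1:ℝ) 1) := by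
  obtain ⟨hx₁l, hx₁r⟩ := hx₁
  -- The weight function W = e^{2sm} φ'
  set W : ℝ → ℝ := fun y => Real.exp (2*s*m y) * φ' y with hWdef
  have hW : ∀ x ∈ Icc (-1:ℝ) 1,
      HasDerivAt W (Real.exp (2*s*m x) * ((c x - lam) * φ x)) x := by
    intro x hx
    have h1 : HasDerivAt (fun y => 2*s*m y) (2*s*m' x) x := (hm x hx).const_mul (2*s)
    have h2 : HasDerivAt (fun y => Real.exp (2*s*m y))
        (Real.exp (2*s*m x) * (2*s*m' x)) x := h1.exp
    have h3 := h2.mul (hφ' x hx)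
    refine h3.congr_deriv ?_
    linear_combination (-Real.exp (2*s*m x)) * hode x hx
  have hW1 : W (-1) = 0 := by simp [hWdef, hNeu₁]
  have hW2 : W 1 = 0 := by simp [hWdef, hNeu₂]
  -- null sets
  have hnull₁ : volume ({t | ¬ c t < lam} ∩ Ioo (-1:ℝ) x₁) = 0 := by
    have h := ae_iff.mp hbelow
    rwa [Measure.restrict_apply' measurableSet_Ioo] at h
  have hnull₂ : volume ({t | ¬ lam < c t} ∩ Ioo x₁ (1:ℝ)) = 0 := by
    have h := ae_iff.mp habove
    rwa [Measure.restrict_apply' measurableSet_Ioo] at h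
  have hcontra₁ : ∀ a b : ℝ, a < b → Ioo a b ⊆ Ioo (-1:ℝ) x₁ →
      (∀ t ∈ Ioo a b, lam ≤ c t) → False := by
    intro a b hab hsub hge
    have h1 : Ioo a b ⊆ {t | ¬ c t < lam} ∩ Ioo (-1:ℝ) x₁ :=
      fun t ht => ⟨not_lt.mpr (hge t ht), hsub ht⟩
    have h2 := measure_mono (μ := (volume : Measure ℝ)) h1
    rw [hnull₁, Real.volume_Ioo, nonpos_iff_eq_zero, ENNReal.ofReal_eq_zero] at h2
    linarith
  have hcontra₂ : ∀ a b : ℝ, a < b → Ioo a b ⊆ Ioo x₁ (1:ℝ) →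
      (∀ t ∈ Ioo a b, c t ≤ lam) → False := by
    intro a b hab hsub hge
    have h1 : Ioo a b ⊆ {t | ¬ lam < c t} ∩ Ioo x₁ (1:ℝ) :=
      fun t ht => ⟨not_lt.mpr (hge t ht), hsub ht⟩
    have h2 := measure_mono (μ := (volume : Measure ℝ)) h1
    rw [hnull₂, Real.volume_Ioo, nonpos_iff_eq_zero, ENNReal.ofReal_eq_zero] at h2
    linarith
  -- c ≤ lam on (-1, x₁)
  have hcle : ∀ x ∈ Ioo (-1:ℝ) x₁, c x ≤ lam := by
    intro x hx
    by_contra h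
    push_neg at h
    have hxI : x ∈ Ioo (-1:ℝ) 1 := ⟨hx.1, hx.2.trans hx₁r⟩
    have hca : ContinuousAt c x :=
      hc.continuousAt (Icc_mem_nhds hxI.1 hxI.2)
    have hev : ∀ᶠ t in nhds x, lam < c t := hca.eventually (eventually_gt_nhds h)
    rw [Metric.eventually_nhds_iff] at hev
    obtain ⟨ε, hε, hball⟩ := hev
    apply hcontra₁ (max (-1) (x - ε)) (min x₁ (x + ε))
    · exact max_lt (lt_min hx₁l (by linarith [hx.1])) (lt_min (by linarith [hx.2]) (by linarith))
    · intro t ht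
      exact ⟨lt_of_le_of_lt (le_max_left _ _) ht.1, lt_of_lt_of_le ht.2 (min_le_left _ _)⟩
    · intro t ht
      refine le_of_lt (hball ?_)
      rw [Real.dist_eq, abs_lt]
      constructor
      · have := lt_of_le_of_lt (le_max_right (-1:ℝ) (x - ε)) ht.1; linarith
      · have := lt_of_lt_of_le ht.2 (min_le_right x₁ (x + ε)); linarith
  -- lam ≤ c on (x₁, 1)
  have hcge : ∀ x ∈ Ioo x₁ (1:ℝ), lam ≤ c x := by
    intro x hx
    by_contra h
    push_neg at h
    have hxI : x ∈ Ioo (-1:ℝ) 1 := ⟨hx₁l.trans hx.1, hx.2⟩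
    have hca : ContinuousAt c x :=
      hc.continuousAt (Icc_mem_nhds hxI.1 hxI.2)
    have hev : ∀ᶠ t in nhds x, c t < lam := hca.eventually (eventually_lt_nhds h)
    rw [Metric.eventually_nhds_iff] at hev
    obtain ⟨ε, hε, hball⟩ := hev
    apply hcontra₂ (max x₁ (x - ε)) (min 1 (x + ε))
    · exact max_lt (lt_min hx₁r (by linarith [hx.1])) (lt_min (by linarith [hx.2]) (by linarith))
    · intro t ht
      exact ⟨lt_of_le_of_lt (le_max_left _ _) ht.1, lt_of_lt_of_le ht.2 (min_le_left _ _)⟩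
    · intro t ht
      refine le_of_lt (hball ?_)
      rw [Real.dist_eq, abs_lt]
      constructor
      · have := lt_of_le_of_lt (le_max_right x₁ (x - ε)) ht.1; linarith
      · have := lt_of_lt_of_le ht.2 (min_le_right (1:ℝ) (x + ε)); linarith
  -- monotonicity of W on the two subintervals
  have hsub₁ : Icc (-1:ℝ) x₁ ⊆ Icc (-1:ℝ) 1 := Icc_subset_Icc le_rfl hx₁r.le
  have hsub₂ : Icc x₁ (1:ℝ) ⊆ Icc (-1:ℝ) 1 := Icc_subset_Icc hx₁l.le le_rfl
  have hWc : ∀ x ∈ Icc (-1:ℝ) 1, ContinuousAt W x := fun x hx => (hW x hx).continuousAt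
  have hanti : AntitoneOn W (Icc (-1:ℝ) x₁) := by
    apply antitoneOn_of_deriv_nonpos (convex_Icc _ _)
      (fun x hx => (hWc x (hsub₁ hx)).continuousWithinAt)
    · intro x hx
      rw [interior_Icc] at hx
      exact (hW x (hsub₁ (Ioo_subset_Icc_self hx))).differentiableAt.differentiableWithinAt
    · intro x hx
      rw [interior_Icc] at hx
      have hxI := hsub₁ (Ioo_subset_Icc_self hx)
      rw [(hW x hxI).deriv]
      have h1 := hcle x hx
      have h2 := hpos x hxI
      exact mul_nonpos_iff.mpr (Or.inl ⟨(Real.exp_pos _).le,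
        mul_nonpos_iff.mpr (Or.inr ⟨by linarith, h2.le⟩)⟩)
  have hmono : MonotoneOn W (Icc x₁ (1:ℝ)) := by
    apply monotoneOn_of_deriv_nonneg (convex_Icc _ _)
      (fun x hx => (hWc x (hsub₂ hx)).continuousWithinAt)
    · intro x hx
      rw [interior_Icc] at hx
      exact (hW x (hsub₂ (Ioo_subset_Icc_self hx))).differentiableAt.differentiableWithinAt
    · intro x hx
      rw [interior_Icc] at hx
      have hxI := hsub₂ (Ioo_subset_Icc_self hx)
      rw [(hW x hxI).deriv]
      have h1 := hcge x hx
      have h2 := hpos x hxI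
      exact mul_nonneg (Real.exp_pos _).le (mul_nonneg (by linarith) h2.le)
  -- W < 0 on (-1,1)
  have hWneg : ∀ x ∈ Ioo (-1:ℝ) 1, W x < 0 := by
    intro x hx
    rcases le_or_gt x x₁ with hxl | hxr
    · have hxm : x ∈ Icc (-1:ℝ) x₁ := ⟨hx.1.le, hxl⟩
      have hle : W x ≤ 0 := by
        have := hanti (left_mem_Icc.mpr (by linarith)) hxm hx.1.le
        rwa [hW1] at this
      rcases hle.lt_or_eq with h | h
      · exact h
      · exfalso
        have hconst : ∀ t ∈ Icc (-1:ℝ) x, W t = 0 := by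
          intro t ht
          have htm : t ∈ Icc (-1:ℝ) x₁ := ⟨ht.1, ht.2.trans hxl⟩
          have ha := hanti (left_mem_Icc.mpr (by linarith)) htm ht.1
          have hb := hanti htm hxm ht.2
          rw [hW1] at ha
          rw [h] at hb
          linarith
        apply hcontra₁ (-1) x hx.1 (Ioo_subset_Ioo le_rfl hxl)
        intro t ht
        have htI : t ∈ Icc (-1:ℝ) 1 := ⟨ht.1.le, (ht.2.trans_le hxl).trans hx₁r |>.le⟩
        have h0 : HasDerivAt W 0 t := by
          have hmem : Ioo (-1:ℝ) x ∈ nhds t := Ioo_mem_nhds ht.1 ht.2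
          have heq : (fun _ => (0:ℝ)) =ᶠ[nhds t] W := by
            filter_upwards [hmem] with u hu
            exact (hconst u ⟨hu.1.le, hu.2.le⟩).symm
          exact (hasDerivAt_const t (0:ℝ)).congr_of_eventuallyEq heq.symm
        have huniq := (hW t htI).unique h0
        have hφt := hpos t htI
        have hexpt := Real.exp_pos (2*s*m t)
        rcases mul_eq_zero.mp huniq with h' | h'
        · exact absurd h' (ne_of_gt hexpt)
        · rcases mul_eq_zero.mp h' with h'' | h''
          · linarith
          · linarith
    · have hxm : x ∈ Icc x₁ (1:ℝ) := ⟨hxr.le, hx.2.le⟩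
      have hle : W x ≤ 0 := by
        have := hmono hxm (right_mem_Icc.mpr (by linarith)) hx.2.le
        rwa [hW2] at this
      rcases hle.lt_or_eq with h | h
      · exact h
      · exfalso
        have hconst : ∀ t ∈ Icc x (1:ℝ), W t = 0 := by
          intro t ht
          have htm : t ∈ Icc x₁ (1:ℝ) := ⟨hxr.le.trans ht.1, ht.2⟩
          have ha := hmono htm (right_mem_Icc.mpr (by linarith)) ht.2
          have hb := hmono hxm htm ht.1
          rw [hW2] at ha
          rw [h] at hb
          linarith
        apply hcontra₂ x 1 hx.2 (Ioo_subset_Ioo hxr.le le_rfl)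
        intro t ht
        have htI : t ∈ Icc (-1:ℝ) 1 := ⟨(hx.1.trans ht.1).le, ht.2.le⟩
        have h0 : HasDerivAt W 0 t := by
          have hmem : Ioo x (1:ℝ) ∈ nhds t := Ioo_mem_nhds ht.1 ht.2
          have heq : (fun _ => (0:ℝ)) =ᶠ[nhds t] W := by
            filter_upwards [hmem] with u hu
            exact (hconst u ⟨hu.1.le, hu.2.le⟩).symm
          exact (hasDerivAt_const t (0:ℝ)).congr_of_eventuallyEq heq.symm
        have huniq := (hW t htI).unique h0
        have hφt := hpos t htI
        have hexpt := Real.exp_pos (2*s*m t)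
        rcases mul_eq_zero.mp huniq with h' | h'
        · exact absurd h' (ne_of_gt hexpt)
        · rcases mul_eq_zero.mp h' with h'' | h''
          · linarith
          · linarith
  have hφ'neg : ∀ x ∈ Ioo (-1:ℝ) 1, φ' x < 0 := by
    intro x hx
    have h1 := hWneg x hx
    have h2 := Real.exp_pos (2*s*m x)
    simp only [hWdef] at h1
    nlinarith
  refine ⟨hφ'neg, ?_⟩
  apply strictAntiOn_of_deriv_neg (convex_Icc _ _)
    (fun x hx => (hφ x hx).continuousAt.continuousWithinAt)
  intro x hx
  rw [interior_Icc] at hx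
  rw [(hφ x (Ioo_subset_Icc_self hx)).deriv]
  exact hφ'neg x hx
end

section
/- Let φ be a positive C² solution of -φ'' - 2s·m'(x)·φ' + c(x)·φ = λ·φ on [-1,1] with φ'(-1) = φ'(1) = 0, and suppose there exists a unique x₁ ∈ (-1,1) with c > λ on (-1, x₁) and c < λ on (x₁, 1) (up to null sets). Then φ'(x) > 0 for all x ∈ (-1, 1), i.e., φ is strictly increasing. -/
open Set Real MeasureTheory

lemma my_int_pos {f : ℝ → ℝ} {a b : ℝ} (hab : a < b)
    (hint : IntervalIntegrable f volume a b)
    (hp : ∀ᵐ t ∂(volume.restrict (Ioo a b)), 0 < f t) :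
    0 < ∫ t in a..b, f t := by
  rw [intervalIntegral.integral_of_le hab.le, MeasureTheory.integral_Ioc_eq_integral_Ioo]
  have h0 : 0 ≤ᵐ[volume.restrict (Ioo a b)] f := hp.mono fun t ht => ht.le
  have hi : IntegrableOn f (Ioo a b) volume :=
    (hint.1).mono_set Ioo_subset_Ioc_self
  rw [MeasureTheory.setIntegral_pos_iff_support_of_nonneg_ae h0 hi]
  have hz : volume ((Function.support f)ᶜ ∩ Ioo a b) = 0 := by
    have : ∀ᵐ t ∂(volume.restrict (Ioo a b)), t ∈ Function.support f :=
      hp.mono fun t ht => ht.ne'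
    have := ae_iff.mp this
    rwa [Measure.restrict_apply' measurableSet_Ioo] at this
  have hle : volume (Ioo a b) ≤ volume (Function.support f ∩ Ioo a b) := by
    calc volume (Ioo a b)
        ≤ volume ((Function.support f ∩ Ioo a b) ∪ ((Function.support f)ᶜ ∩ Ioo a b)) := by
          apply measure_mono; intro t ht
          by_cases h : t ∈ Function.support f
          · exact Or.inl ⟨h, ht⟩
          · exact Or.inr ⟨h, ht⟩
      _ ≤ volume (Function.support f ∩ Ioo a b) + volume ((Function.support f)ᶜ ∩ Ioo a b) :=
          measure_union_le _ _
      _ = volume (Function.support f ∩ Ioo a b) := by rw [hz, add_zero]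
  have : (0:ENNReal) < volume (Ioo a b) := by
    rw [Real.volume_Ioo]; simp [hab]
  exact lt_of_lt_of_le this hle

theorem stmt6 (φ φ' φ'' m m' c : ℝ → ℝ) (s lam x₁ : ℝ)
    (hφ : ∀ x ∈ Icc (-1:ℝ) 1, HasDerivAt φ (φ' x) x)
    (hφ' : ∀ x ∈ Icc (-1:ℝ) 1, HasDerivAt φ' (φ'' x) x)
    (hφ''c : ContinuousOn φ'' (Icc (-1:ℝ) 1))
    (hm : ∀ x ∈ Icc (-1:ℝ) 1, HasDerivAt m (m' x) x)
    (hm'c : ContinuousOn m' (Icc (-1:ℝ) 1))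
    (hc : ContinuousOn c (Icc (-1:ℝ) 1))
    (hpos : ∀ x ∈ Icc (-1:ℝ) 1, 0 < φ x)
    (hode : ∀ x ∈ Icc (-1:ℝ) 1,
      -φ'' x - 2 * s * m' x * φ' x + c x * φ x = lam * φ x)
    (hNeu₁ : φ' (-1) = 0) (hNeu₂ : φ' 1 = 0)
    (hx₁ : x₁ ∈ Ioo (-1:ℝ) 1)
    (habove : ∀ᵐ t ∂(volume.restrict (Ioo (-1:ℝ) x₁)), lam < c t)
    (hbelow : ∀ᵐ t ∂(volume.restrict (Ioo x₁ (1:ℝ))), c t < lam) :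
    (∀ x ∈ Ioo (-1:ℝ) 1, 0 < φ' x) ∧ StrictMonoOn φ (Icc (-1:ℝ) 1) := by
  set g : ℝ → ℝ := fun x => Real.exp (2 * s * m x) * φ' x with hgdef
  set g' : ℝ → ℝ := fun x => Real.exp (2 * s * m x) * ((c x - lam) * φ x) with hg'def
  have hφcont : ContinuousOn φ (Icc (-1:ℝ) 1) :=
    fun x hx => (hφ x hx).continuousAt.continuousWithinAt
  have hmcont : ContinuousOn m (Icc (-1:ℝ) 1) :=
    fun x hx => (hm x hx).continuousAt.continuousWithinAt
  have hg'cont : ContinuousOn g' (Icc (-1:ℝ) 1) := by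
    exact (Real.continuous_exp.comp_continuousOn (continuousOn_const.mul hmcont)).mul
      ((hc.sub continuousOn_const).mul hφcont)
  have hg : ∀ x ∈ Icc (-1:ℝ) 1, HasDerivAt g (g' x) x := by
    intro x hx
    have h1 : HasDerivAt (fun y => 2 * s * m y) (2 * s * m' x) x := (hm x hx).const_mul _
    have h2 := h1.exp
    have h3 : HasDerivAt (fun y => Real.exp (2 * s * m y) * φ' y) _ x := h2.mul (hφ' x hx)
    have hkey : (c x - lam) * φ x = φ'' x + 2 * s * m' x * φ' x := by
      linear_combination hode x hx
    convert h3 using 1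
    show Real.exp (2 * s * m x) * ((c x - lam) * φ x) = _
    rw [hkey]; ring
  -- FTC
  have ftc : ∀ a ∈ Icc (-1:ℝ) 1, ∀ b ∈ Icc (-1:ℝ) 1, a ≤ b →
      ∫ t in a..b, g' t = g b - g a := by
    intro a ha b hb hab
    have hsub : Icc a b ⊆ Icc (-1:ℝ) 1 := Icc_subset_Icc ha.1 hb.2
    apply intervalIntegral.integral_eq_sub_of_hasDerivAt
    · intro x hx
      rw [uIcc_of_le hab] at hx
      exact hg x (hsub hx)
    · apply ContinuousOn.intervalIntegrable
      rw [uIcc_of_le hab]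
      exact hg'cont.mono hsub
  have hgneg1 : g (-1) = 0 := by simp [hgdef, hNeu₁]
  have hg1 : g 1 = 0 := by simp [hgdef, hNeu₂]
  have key : ∀ x ∈ Ioo (-1:ℝ) 1, 0 < g x := by
    intro x hx
    rcases le_or_gt x x₁ with hle | hlt
    · -- g x = ∫_{-1}^x g' > 0
      have hxI : x ∈ Icc (-1:ℝ) 1 := Ioo_subset_Icc_self hx
      have hI : ∫ t in (-1:ℝ)..x, g' t = g x - g (-1) :=
        ftc (-1) (by constructor <;> norm_num) x hxI hxI.1
      have hpos' : 0 < ∫ t in (-1:ℝ)..x, g' t := by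
        apply my_int_pos hx.1
        · apply ContinuousOn.intervalIntegrable
          rw [uIcc_of_le hx.1.le]
          exact hg'cont.mono (Icc_subset_Icc le_rfl hxI.2)
        · have hmono : ∀ᵐ t ∂(volume.restrict (Ioo (-1:ℝ) x)), lam < c t := by
            refine habove.filter_mono (ae_mono (Measure.restrict_mono ?_ le_rfl))
            exact Ioo_subset_Ioo le_rfl hle
          filter_upwards [ae_restrict_mem measurableSet_Ioo, hmono] with t ht hct
          have htI : t ∈ Icc (-1:ℝ) 1 :=
            ⟨ht.1.le, ht.2.le.trans hxI.2⟩
          have h1 := hpos t htI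
          have h2 := Real.exp_pos (2 * s * m t)
          show 0 < Real.exp (2 * s * m t) * ((c t - lam) * φ t)
          exact mul_pos h2 (mul_pos (by linarith) h1)
      rw [hI, hgneg1] at hpos'
      linarith
    · -- g x = ∫_x^1 (-g') > 0
      have hxI : x ∈ Icc (-1:ℝ) 1 := Ioo_subset_Icc_self hx
      have hI : ∫ t in x..(1:ℝ), g' t = g 1 - g x :=
        ftc x hxI 1 (by constructor <;> norm_num) hxI.2
      have hpos' : 0 < ∫ t in x..(1:ℝ), (-g' t) := by
        apply my_int_pos hx.2
        · apply IntervalIntegrable.neg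
          apply ContinuousOn.intervalIntegrable
          rw [uIcc_of_le hx.2.le]
          exact hg'cont.mono (Icc_subset_Icc hxI.1 le_rfl)
        · have hmono : ∀ᵐ t ∂(volume.restrict (Ioo x (1:ℝ))), c t < lam := by
            refine hbelow.filter_mono (ae_mono (Measure.restrict_mono ?_ le_rfl))
            exact Ioo_subset_Ioo hlt.le le_rfl
          filter_upwards [ae_restrict_mem measurableSet_Ioo, hmono] with t ht hct
          have htI : t ∈ Icc (-1:ℝ) 1 := ⟨hxI.1.trans ht.1.le, ht.2.le⟩
          have h1 := hpos t htI
          have h2 := Real.exp_pos (2 * s * m t)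
          show 0 < -(Real.exp (2 * s * m t) * ((c t - lam) * φ t))
          have h3 : -(Real.exp (2 * s * m t) * ((c t - lam) * φ t))
              = Real.exp (2 * s * m t) * ((lam - c t) * φ t) := by ring
          rw [h3]
          exact mul_pos h2 (mul_pos (by linarith) h1)
      rw [intervalIntegral.integral_neg, hI, hg1] at hpos'
      linarith
  have hmain : ∀ x ∈ Ioo (-1:ℝ) 1, 0 < φ' x := by
    intro x hx
    have h := key x hx
    have h2 := Real.exp_pos (2 * s * m x)
    have : 0 < Real.exp (2 * s * m x) * φ' x := h
    nlinarith
  refine ⟨hmain, ?_⟩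
  apply strictMonoOn_of_deriv_pos (convex_Icc _ _) hφcont
  intro x hx
  rw [interior_Icc] at hx
  rw [(hφ x (Ioo_subset_Icc_self hx)).deriv]
  exact hmain x hx
end

section
/- Let φ be a positive C² solution of -φ'' - 2s·m'(x)·φ' + c(x)·φ = λ·φ on [-1,1], and let a < b in [-1,1] be such that c < λ on (a, b) (up to a null set). If y₀ ∈ (a, b) satisfies φ'(y₀) = 0, then y₀ is the unique critical point of φ in (a, b); moreover φ'(x) > 0 for x ∈ (a, y₀) and φ'(x) < 0 for x ∈ (y₀, b), so φ attains its maximum over [a,b] at y₀. -/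
open Set Real MeasureTheory

theorem stmt7 (φ φ' φ'' m m' c : ℝ → ℝ) (s lam a b y₀ : ℝ)
    (hφ : ∀ x ∈ Icc (-1:ℝ) 1, HasDerivAt φ (φ' x) x)
    (hφ' : ∀ x ∈ Icc (-1:ℝ) 1, HasDerivAt φ' (φ'' x) x)
    (hφ''c : ContinuousOn φ'' (Icc (-1:ℝ) 1))
    (hm : ∀ x ∈ Icc (-1:ℝ) 1, HasDerivAt m (m' x) x)
    (hm'c : ContinuousOn m' (Icc (-1:ℝ) 1))
    (hc : ContinuousOn c (Icc (-1:ℝ) 1))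
    (hpos : ∀ x ∈ Icc (-1:ℝ) 1, 0 < φ x)
    (hode : ∀ x ∈ Icc (-1:ℝ) 1,
      -φ'' x - 2 * s * m' x * φ' x + c x * φ x = lam * φ x)
    (hab : a < b) (ha : a ∈ Icc (-1:ℝ) 1) (hb : b ∈ Icc (-1:ℝ) 1)
    (hcl : ∀ᵐ t ∂(volume.restrict (Ioo a b)), c t < lam)
    (hy₀ : y₀ ∈ Ioo a b) (hcrit : φ' y₀ = 0) :
    (∀ x ∈ Ioo a b, φ' x = 0 → x = y₀) ∧
    (∀ x ∈ Ioo a y₀, 0 < φ' x) ∧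
    (∀ x ∈ Ioo y₀ b, φ' x < 0) ∧
    (∀ x ∈ Icc a b, φ x ≤ φ y₀) := by
  obtain ⟨hay, hyb⟩ := hy₀
  have hsub : Icc a b ⊆ Icc (-1:ℝ) 1 := Icc_subset_Icc ha.1 hb.2
  have hsubo : Ioo a b ⊆ Icc (-1:ℝ) 1 := fun x hx => hsub (Ioo_subset_Icc_self hx)
  set E : ℝ → ℝ := fun x => Real.exp (2*s*m x) with hEdef
  set w : ℝ → ℝ := fun x => E x * φ' x with hWdef
  have hEpos : ∀ x, 0 < E x := fun x => Real.exp_pos _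
  -- derivative of w
  have hw : ∀ x ∈ Icc (-1:ℝ) 1, HasDerivAt w (E x * ((c x - lam) * φ x)) x := by
    intro x hx
    have h1 : HasDerivAt (fun y => 2*s*m y) (2*s*m' x) x := (hm x hx).const_mul _
    have h2 : HasDerivAt E (E x * (2*s*m' x)) x := h1.exp
    have h3 := h2.mul (hφ' x hx)
    refine h3.congr_deriv ?_
    linear_combination (-E x) * hode x hx
  -- continuity facts
  have hmc : ContinuousOn m (Icc (-1:ℝ) 1) := fun x hx => (hm x hx).continuousAt.continuousWithinAt
  have hφc : ContinuousOn φ (Icc (-1:ℝ) 1) := fun x hx => (hφ x hx).continuousAt.continuousWithinAt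
  have hEc : ContinuousOn E (Icc (-1:ℝ) 1) :=
    Real.continuous_exp.comp_continuousOn (continuousOn_const.mul hmc)
  have hfc : ContinuousOn (fun t => E t * ((c t - lam) * φ t)) (Icc (-1:ℝ) 1) :=
    hEc.mul ((hc.sub continuousOn_const).mul hφc)
  -- null set
  have hnull : volume ({t | ¬ c t < lam} ∩ Ioo a b) = 0 := by
    have := ae_iff.mp hcl
    rwa [Measure.restrict_apply' measurableSet_Ioo] at this
  -- c ≤ lam on Icc a b
  have hcle : ∀ t ∈ Icc a b, c t ≤ lam := by
    intro t ht
    by_contra hlt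
    push_neg at hlt
    have hct : ContinuousWithinAt c (Icc (-1:ℝ) 1) t := hc t (hsub ht)
    have hmem : c ⁻¹' Ioi lam ∈ nhdsWithin t (Icc (-1:ℝ) 1) := hct (Ioi_mem_nhds hlt)
    obtain ⟨U, hUo, htU, hUsub⟩ := mem_nhdsWithin.mp hmem
    obtain ⟨ε, hε, hball⟩ := Metric.isOpen_iff.mp hUo t htU
    set p := max a (t - ε) with hp
    set q := min b (t + ε) with hq
    have hpq : p < q := by
      apply max_lt
      · exact lt_min hab (by linarith [ht.1])
      · exact lt_min (by linarith [ht.2]) (by linarith)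
    have hsubint : Ioo p q ⊆ {u | ¬ c u < lam} ∩ Ioo a b := by
      intro x hx
      have hxab : x ∈ Ioo a b :=
        ⟨lt_of_le_of_lt (le_max_left _ _) hx.1, lt_of_lt_of_le hx.2 (min_le_left _ _)⟩
      have hxball : x ∈ Metric.ball t ε := by
        rw [Metric.mem_ball, Real.dist_eq, abs_lt]
        constructor
        · have := lt_of_le_of_lt (le_max_right _ _) hx.1; linarith
        · have := lt_of_lt_of_le hx.2 (min_le_right _ _); linarith
      have : lam < c x := hUsub ⟨hball hxball, hsubo hxab⟩
      exact ⟨not_lt.mpr this.le, hxab⟩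
    have h1 : volume (Ioo p q) = 0 :=
      le_antisymm (hnull ▸ measure_mono hsubint) (zero_le)
    rw [Real.volume_Ioo] at h1
    exact absurd h1 (ENNReal.ofReal_pos.2 (sub_pos.2 hpq)).ne'
  -- w is strictly decreasing on [a,b]
  have key : ∀ u v, a ≤ u → u < v → v ≤ b → w v < w u := by
    intro u v hau huv hvb
    have huv' : u ≤ v := huv.le
    have hIuv : Icc u v ⊆ Icc (-1:ℝ) 1 := (Icc_subset_Icc hau hvb).trans hsub
    have hftc : ∫ t in u..v, E t * ((c t - lam) * φ t) = w v - w u := by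
      apply intervalIntegral.integral_eq_sub_of_hasDerivAt
      · intro t ht
        rw [uIcc_of_le huv'] at ht
        exact hw t (hIuv ht)
      · apply ContinuousOn.intervalIntegrable
        rw [uIcc_of_le huv']
        exact hfc.mono hIuv
    have hint : ∫ t in u..v, E t * ((c t - lam) * φ t)
        = ∫ t in Ioo u v, E t * ((c t - lam) * φ t) := by
      rw [intervalIntegral.integral_of_le huv', MeasureTheory.integral_Ioc_eq_integral_Ioo]
    set μ := volume.restrict (Ioo u v) with hμ
    have hIoo_sub : Ioo u v ⊆ Ioo a b := Ioo_subset_Ioo hau hvb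
    have hae : ∀ᵐ t ∂μ, c t < lam := ae_mono (Measure.restrict_mono hIoo_sub le_rfl) hcl
    have haemem : ∀ᵐ t ∂μ, t ∈ Ioo u v := ae_restrict_mem measurableSet_Ioo
    have hintg : IntegrableOn (fun t => E t * ((c t - lam) * φ t)) (Ioo u v) volume :=
      ((hfc.mono hIuv).integrableOn_Icc).mono_set Ioo_subset_Icc_self
    have hg : Integrable (fun t => -(E t * ((c t - lam) * φ t))) μ := hintg.neg
    have hgnn : 0 ≤ᵐ[μ] fun t => -(E t * ((c t - lam) * φ t)) := by
      filter_upwards [haemem] with t ht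
      have htI : t ∈ Icc (-1:ℝ) 1 := hsubo (hIoo_sub ht)
      have hcle' := hcle t (Ioo_subset_Icc_self (hIoo_sub ht))
      have h0 : -(E t * ((c t - lam) * φ t)) = E t * ((lam - c t) * φ t) := by ring
      rw [h0]
      exact mul_nonneg (hEpos t).le (mul_nonneg (sub_nonneg.2 hcle') (hpos t htI).le)
    have hIg : 0 ≤ ∫ t, -(E t * ((c t - lam) * φ t)) ∂μ := integral_nonneg_of_ae hgnn
    have hne : ∫ t, -(E t * ((c t - lam) * φ t)) ∂μ ≠ 0 := by
      intro h0
      have heq0 := (integral_eq_zero_iff_of_nonneg_ae hgnn hg).mp h0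
      have hfalse : ∀ᵐ t ∂μ, False := by
        filter_upwards [haemem, hae, heq0] with t ht hclt heq
        have htI : t ∈ Icc (-1:ℝ) 1 := hsubo (hIoo_sub ht)
        have h1 : 0 < E t * ((lam - c t) * φ t) :=
          mul_pos (hEpos t) (mul_pos (sub_pos.2 hclt) (hpos t htI))
        simp only [Pi.zero_apply] at heq
        nlinarith
      have hz : μ Set.univ = 0 := by simpa using ae_iff.mp hfalse
      rw [hμ, Measure.restrict_apply_univ, Real.volume_Ioo] at hz
      exact absurd hz (ENNReal.ofReal_pos.2 (sub_pos.2 huv)).ne'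
    have hgpos : 0 < ∫ t, -(E t * ((c t - lam) * φ t)) ∂μ := lt_of_le_of_ne hIg (Ne.symm hne)
    rw [integral_neg] at hgpos
    have : ∫ t, E t * ((c t - lam) * φ t) ∂μ < 0 := by linarith
    have h2 : w v - w u < 0 := by rw [← hftc, hint]; exact this
    linarith
  have hwy : w y₀ = 0 := by simp [hWdef, hcrit]
  have hposl : ∀ x ∈ Ioo a y₀, 0 < φ' x := by
    intro x hx
    have h1 : w y₀ < w x := key x y₀ hx.1.le hx.2 hyb.le
    rw [hwy] at h1
    simp only [hWdef] at h1
    nlinarith [hEpos x]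
  have hnegr : ∀ x ∈ Ioo y₀ b, φ' x < 0 := by
    intro x hx
    have h1 : w x < w y₀ := key y₀ x hay.le hx.1 hx.2.le
    rw [hwy] at h1
    simp only [hWdef] at h1
    nlinarith [hEpos x]
  have hcontφ : ContinuousOn φ (Icc a b) := hφc.mono hsub
  have hmono : StrictMonoOn φ (Icc a y₀) := by
    apply strictMonoOn_of_deriv_pos (convex_Icc a y₀)
      (hcontφ.mono (Icc_subset_Icc le_rfl hyb.le))
    intro x hx
    rw [interior_Icc] at hx
    have hxI : x ∈ Icc (-1:ℝ) 1 := hsubo ⟨hx.1, hx.2.trans hyb⟩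
    rw [(hφ x hxI).deriv]
    exact hposl x hx
  have hanti : StrictAntiOn φ (Icc y₀ b) := by
    apply strictAntiOn_of_deriv_neg (convex_Icc y₀ b)
      (hcontφ.mono (Icc_subset_Icc hay.le le_rfl))
    intro x hx
    rw [interior_Icc] at hx
    have hxI : x ∈ Icc (-1:ℝ) 1 := hsubo ⟨hay.trans hx.1, hx.2⟩
    rw [(hφ x hxI).deriv]
    exact hnegr x hx
  refine ⟨?_, hposl, hnegr, ?_⟩
  · intro x hx hzx
    rcases lt_trichotomy x y₀ with h | h | h
    · exact absurd hzx (ne_of_gt (hposl x ⟨hx.1, h⟩))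
    · exact h
    · exact absurd hzx (ne_of_lt (hnegr x ⟨h, hx.2⟩))
  · intro x hx
    rcases le_or_gt x y₀ with h | h
    · rcases eq_or_lt_of_le h with rfl | h'
      · exact le_rfl
      · exact (hmono ⟨hx.1, h⟩ ⟨hay.le, le_rfl⟩ h').le
    · exact (hanti ⟨le_rfl, hyb.le⟩ ⟨h.le, hx.2⟩ h).le
end

section
/- Let φ be a positive C² solution of -φ'' - 2s·m'(x)·φ' + c(x)·φ = λ·φ on [-1,1], and let a < b in [-1,1] with c > λ on (a, b) (up to a null set). If y₀ ∈ (a, b) satisfies φ'(y₀) = 0, then y₀ is the unique critical point of φ in (a, b); moreover φ'(x) < 0 for x ∈ (a, y₀) and φ'(x) > 0 for x ∈ (y₀, b), so φ attains its minimum over [a,b] at y₀. -/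
open Set Real MeasureTheory

theorem stmt8 (φ φ' φ'' m m' c : ℝ → ℝ) (s lam a b y₀ : ℝ)
    (hφ : ∀ x ∈ Icc (-1:ℝ) 1, HasDerivAt φ (φ' x) x)
    (hφ' : ∀ x ∈ Icc (-1:ℝ) 1, HasDerivAt φ' (φ'' x) x)
    (hφ''c : ContinuousOn φ'' (Icc (-1:ℝ) 1))
    (hm : ∀ x ∈ Icc (-1:ℝ) 1, HasDerivAt m (m' x) x)
    (hm'c : ContinuousOn m' (Icc (-1:ℝ) 1))
    (hc : ContinuousOn c (Icc (-1:ℝ) 1))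
    (hpos : ∀ x ∈ Icc (-1:ℝ) 1, 0 < φ x)
    (hode : ∀ x ∈ Icc (-1:ℝ) 1,
      -φ'' x - 2 * s * m' x * φ' x + c x * φ x = lam * φ x)
    (hab : a < b) (ha : a ∈ Icc (-1:ℝ) 1) (hb : b ∈ Icc (-1:ℝ) 1)
    (hcg : ∀ᵐ t ∂(volume.restrict (Ioo a b)), lam < c t)
    (hy₀ : y₀ ∈ Ioo a b) (hcrit : φ' y₀ = 0) :
    (∀ x ∈ Ioo a b, φ' x = 0 → x = y₀) ∧
    (∀ x ∈ Ioo a y₀, φ' x < 0) ∧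
    (∀ x ∈ Ioo y₀ b, 0 < φ' x) ∧
    (∀ x ∈ Icc a b, φ y₀ ≤ φ x) := by
  have hsub : Icc a b ⊆ Icc (-1:ℝ) 1 := Icc_subset_Icc ha.1 hb.2
  set w : ℝ → ℝ := fun t => Real.exp (2*s*m t) * φ' t with hwdef
  set g : ℝ → ℝ := fun t => Real.exp (2*s*m t) * ((c t - lam) * φ t) with hgdef
  -- derivative of w
  have hw : ∀ x ∈ Icc (-1:ℝ) 1, HasDerivAt w (g x) x := by
    intro x hx
    have h1 : HasDerivAt (fun t => Real.exp (2*s*m t))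
        (Real.exp (2*s*m x) * (2*s*m' x)) x := by
      have := ((hm x hx).const_mul (2*s)).exp
      simpa [mul_comm] using this
    have h2 : HasDerivAt (fun t => Real.exp (2*s*m t) * φ' t)
        (Real.exp (2*s*m x) * (2*s*m' x) * φ' x + Real.exp (2*s*m x) * φ'' x) x :=
      h1.mul (hφ' x hx)
    have hode' := hode x hx
    convert h2 using 1
    simp only [hgdef]
    linear_combination (Real.exp (2*s*m x)) * hode'
  -- continuity facts
  have hmc : ContinuousOn m (Icc (-1:ℝ) 1) :=
    fun t ht => (hm t ht).continuousAt.continuousWithinAt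
  have hφc : ContinuousOn φ (Icc (-1:ℝ) 1) :=
    fun t ht => (hφ t ht).continuousAt.continuousWithinAt
  have hgc : ContinuousOn g (Icc (-1:ℝ) 1) := by
    apply ContinuousOn.mul
    · exact Real.continuous_exp.comp_continuousOn (continuousOn_const.mul hmc)
    · exact (hc.sub continuousOn_const).mul hφc
  -- strict monotonicity of w on Icc a b
  have hwstrict : ∀ x ∈ Icc a b, ∀ y ∈ Icc a b, x < y → w x < w y := by
    intro x hx y hy hxy
    have hIccsub : Icc x y ⊆ Icc (-1:ℝ) 1 :=
      subset_trans (Icc_subset_Icc hx.1 hy.2) hsub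
    have hftc : (∫ t in x..y, g t) = w y - w x := by
      apply intervalIntegral.integral_eq_sub_of_hasDerivAt
      · intro t ht
        rw [uIcc_of_le hxy.le] at ht
        exact hw t (hIccsub ht)
      · exact (hgc.mono hIccsub).intervalIntegrable_of_Icc hxy.le
    have hIoo_sub : Ioo x y ⊆ Ioo a b := Ioo_subset_Ioo hx.1 hy.2
    have h1 : ∀ᵐ t ∂(volume.restrict (Ioo x y)), lam < c t :=
      ae_restrict_of_ae_restrict_of_subset hIoo_sub hcg
    have h2 : ∀ᵐ t ∂(volume.restrict (Ioo x y)), t ∈ Ioo x y :=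
      ae_restrict_mem measurableSet_Ioo
    have h3 : ∀ᵐ t ∂(volume.restrict (Ioo x y)), 0 < g t := by
      filter_upwards [h1, h2] with t ht1 ht2
      have htI : t ∈ Icc (-1:ℝ) 1 := hIccsub (Ioo_subset_Icc_self ht2)
      exact mul_pos (Real.exp_pos _) (mul_pos (by linarith) (hpos t htI))
    have hnn : 0 ≤ᵐ[volume.restrict (Ioo x y)] g := h3.mono (fun t ht => ht.le)
    have hgint : IntegrableOn g (Ioo x y) := by
      exact ((hgc.mono hIccsub).integrableOn_Icc).mono_set Ioo_subset_Icc_self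
    have h0le : 0 ≤ ∫ t in Ioo x y, g t := integral_nonneg_of_ae hnn
    have h4 : 0 < ∫ t in Ioo x y, g t := by
      rcases h0le.lt_or_eq with h | h
      · exact h
      · exfalso
        have hz : g =ᵐ[volume.restrict (Ioo x y)] 0 :=
          (integral_eq_zero_iff_of_nonneg_ae hnn hgint).mp h.symm
        have hfalse : ∀ᵐ t ∂(volume.restrict (Ioo x y)), False := by
          filter_upwards [h3, hz] with t ht1 ht2
          rw [ht2] at ht1; exact lt_irrefl 0 ht1
        have hbot : volume.restrict (Ioo x y) = 0 :=
          ae_eq_bot.mp (Filter.eventually_false_iff_eq_bot.mp hfalse)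
        have : volume (Ioo x y) = 0 := by
          rw [← Measure.restrict_apply_univ, hbot]; simp
        rw [Real.volume_Ioo] at this
        exact (ENNReal.ofReal_pos.mpr (by linarith)).ne' this
    have heq : (∫ t in x..y, g t) = ∫ t in Ioo x y, g t := by
      rw [intervalIntegral.integral_of_le hxy.le, integral_Ioc_eq_integral_Ioo]
    rw [heq] at hftc
    linarith
  have hy₀ab : y₀ ∈ Icc a b := Icc_subset_Icc_right le_rfl (Ioo_subset_Icc_self hy₀)
  have hwy₀ : w y₀ = 0 := by simp [hwdef, hcrit]
  have hexp : ∀ t, 0 < Real.exp (2*s*m t) := fun t => Real.exp_pos _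
  -- signs of φ'
  have hneg : ∀ x ∈ Ioo a y₀, φ' x < 0 := by
    intro x hx
    have hxab : x ∈ Icc a b := ⟨hx.1.le, hx.2.le.trans hy₀.2.le⟩
    have h' : Real.exp (2*s*m x) * φ' x < 0 := by
      have := hwstrict x hxab y₀ hy₀ab hx.2
      rw [hwy₀] at this; exact this
    nlinarith [hexp x]
  have hposd : ∀ x ∈ Ioo y₀ b, 0 < φ' x := by
    intro x hx
    have hxab : x ∈ Icc a b := ⟨hy₀.1.le.trans hx.1.le, hx.2.le⟩
    have h' : 0 < Real.exp (2*s*m x) * φ' x := by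
      have := hwstrict y₀ hy₀ab x hxab hx.1
      rw [hwy₀] at this; exact this
    nlinarith [hexp x]
  -- monotone version
  have hwmono : ∀ x ∈ Icc a b, ∀ y ∈ Icc a b, x ≤ y → w x ≤ w y := by
    intro x hx y hy hxy
    rcases hxy.lt_or_eq with h | h
    · exact (hwstrict x hx y hy h).le
    · rw [h]
  have hnple : ∀ x ∈ Icc a y₀, φ' x ≤ 0 := by
    intro x hx
    have hxab : x ∈ Icc a b := ⟨hx.1, hx.2.trans hy₀.2.le⟩
    have h' : Real.exp (2*s*m x) * φ' x ≤ 0 := by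
      have := hwmono x hxab y₀ hy₀ab hx.2
      rw [hwy₀] at this; exact this
    nlinarith [hexp x]
  have hpple : ∀ x ∈ Icc y₀ b, 0 ≤ φ' x := by
    intro x hx
    have hxab : x ∈ Icc a b := ⟨hy₀.1.le.trans hx.1, hx.2⟩
    have h' : 0 ≤ Real.exp (2*s*m x) * φ' x := by
      have := hwmono y₀ hy₀ab x hxab hx.1
      rw [hwy₀] at this; exact this
    nlinarith [hexp x]
  have hφ'c : ContinuousOn φ' (Icc (-1:ℝ) 1) :=
    fun t ht => (hφ' t ht).continuousAt.continuousWithinAt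
  refine ⟨?_, hneg, hposd, ?_⟩
  · intro x hx hx0
    by_contra hne
    rcases lt_or_gt_of_ne hne with h | h
    · exact absurd hx0 (ne_of_lt (hneg x ⟨hx.1, h⟩))
    · exact absurd hx0 (ne_of_gt (hposd x ⟨h, hx.2⟩))
  · intro x hx
    rcases le_total x y₀ with h | h
    · have hIccsub : Icc x y₀ ⊆ Icc (-1:ℝ) 1 :=
        subset_trans (Icc_subset_Icc hx.1 hy₀ab.2) hsub
      have hftc : (∫ t in x..y₀, φ' t) = φ y₀ - φ x := by
        apply intervalIntegral.integral_eq_sub_of_hasDerivAt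
        · intro t ht
          rw [uIcc_of_le h] at ht
          exact hφ t (hIccsub ht)
        · exact (hφ'c.mono hIccsub).intervalIntegrable_of_Icc h
      have hint : (∫ t in x..y₀, φ' t) ≤ 0 := by
        have hnn : 0 ≤ ∫ t in x..y₀, -φ' t :=
          intervalIntegral.integral_nonneg h
            (fun u hu => by linarith [hnple u ⟨hx.1.trans hu.1, hu.2⟩])
        rw [intervalIntegral.integral_neg] at hnn
        linarith
      rw [hftc] at hint
      linarith
    · have hIccsub : Icc y₀ x ⊆ Icc (-1:ℝ) 1 :=
        subset_trans (Icc_subset_Icc hy₀ab.1 hx.2) hsub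
      have hftc : (∫ t in y₀..x, φ' t) = φ x - φ y₀ := by
        apply intervalIntegral.integral_eq_sub_of_hasDerivAt
        · intro t ht
          rw [uIcc_of_le h] at ht
          exact hφ t (hIccsub ht)
        · exact (hφ'c.mono hIccsub).intervalIntegrable_of_Icc h
      have hint : 0 ≤ ∫ t in y₀..x, φ' t := by
        apply intervalIntegral.integral_nonneg h
        intro u hu
        exact hpple u ⟨hu.1, hu.2.trans hx.2⟩
      rw [hftc] at hint
      linarith
end

section
/- Let φ be a C² solution of -φ'' - 2s·m'(x)·φ' + c(x)·φ = λ·φ on [-1,1] with φ'(-1)=φ'(1)=0, 0 < φ ≤ 1 on [-1,1], and λ ∈ (min c, max c). Suppose m ∈ C¹([-1,1]), m' > 0 on [-1, x₀) for some x₀ ∈ (-1,1). Then for every δ ∈ (0, 1+x₀) and all x ∈ [-1, x₀ - δ], |φ'(x)| ≤ (‖c‖_∞ / μ) · (1 - e^{-2sμ(x₀-δ+1)})/s, where μ := min_{[-1, x₀-δ]} m' > 0 and s > 0. -/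
open Set Real

theorem stmt9 (φ φ' φ'' m m' c : ℝ → ℝ) (s lam x₀ : ℝ)
    (hφ : ∀ x ∈ Icc (-1:ℝ) 1, HasDerivAt φ (φ' x) x)
    (hφ' : ∀ x ∈ Icc (-1:ℝ) 1, HasDerivAt φ' (φ'' x) x)
    (hφ''c : ContinuousOn φ'' (Icc (-1:ℝ) 1))
    (hm : ∀ x ∈ Icc (-1:ℝ) 1, HasDerivAt m (m' x) x)
    (hm'c : ContinuousOn m' (Icc (-1:ℝ) 1))
    (hc : ContinuousOn c (Icc (-1:ℝ) 1))
    (hode : ∀ x ∈ Icc (-1:ℝ) 1,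
      -φ'' x - 2 * s * m' x * φ' x + c x * φ x = lam * φ x)
    (hNeu₁ : φ' (-1) = 0) (hNeu₂ : φ' 1 = 0)
    (hφ01 : ∀ x ∈ Icc (-1:ℝ) 1, 0 < φ x ∧ φ x ≤ 1)
    (hlam : lam ∈ Ioo (sInf (c '' Icc (-1:ℝ) 1)) (sSup (c '' Icc (-1:ℝ) 1)))
    (hx₀ : x₀ ∈ Ioo (-1:ℝ) 1)
    (hm'pos : ∀ x ∈ Ico (-1:ℝ) x₀, 0 < m' x)
    (hs : 0 < s) :
    ∀ δ, 0 < δ → δ < 1 + x₀ →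
      ∀ μ, IsLeast (m' '' Icc (-1:ℝ) (x₀ - δ)) μ → 0 < μ →
        ∀ C, IsLUB ((fun x => |c x|) '' Icc (-1:ℝ) 1) C →
          ∀ x ∈ Icc (-1:ℝ) (x₀ - δ),
            |φ' x| ≤ (C / μ) * ((1 - Real.exp (-2 * s * μ * (x₀ - δ + 1))) / s) := by
  intro δ hδ0 hδ1 μ hμ hμpos C hC x hx
  set a := x₀ - δ with ha
  have hax : a < 1 := by have := hx₀.2; simp only [ha]; linarith
  have ham : (-1:ℝ) < a := by simp only [ha]; linarith
  have hsub : Icc (-1:ℝ) a ⊆ Icc (-1:ℝ) 1 := Icc_subset_Icc le_rfl hax.le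
  have hx1 : x ∈ Icc (-1:ℝ) 1 := hsub hx
  have hxle : (-1:ℝ) ≤ x := hx.1
  have hsubx : Icc (-1:ℝ) x ⊆ Icc (-1:ℝ) 1 := Icc_subset_Icc le_rfl hx1.2
  have huIcc : uIcc (-1:ℝ) x = Icc (-1) x := uIcc_of_le hxle
  -- bounds from C
  have hCb : ∀ t ∈ Icc (-1:ℝ) 1, |c t| ≤ C := fun t ht => hC.1 ⟨t, ht, rfl⟩
  have hC0 : 0 ≤ C := le_trans (abs_nonneg _) (hCb (-1) (by norm_num))
  have hlamC : |lam| ≤ C := by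
    have hne : (Icc (-1:ℝ) 1).Nonempty := nonempty_Icc.2 (by norm_num)
    have h1 : sSup (c '' Icc (-1:ℝ) 1) ≤ C := by
      apply csSup_le (hne.image _)
      rintro y ⟨t, ht, rfl⟩
      exact le_trans (le_abs_self _) (hCb t ht)
    have h2 : -C ≤ sInf (c '' Icc (-1:ℝ) 1) := by
      apply le_csInf (hne.image _)
      rintro y ⟨t, ht, rfl⟩
      exact (abs_le.1 (hCb t ht)).1
    rw [abs_le]
    exact ⟨le_of_lt (lt_of_le_of_lt h2 hlam.1), le_of_lt (lt_of_lt_of_le hlam.2 h1)⟩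
  -- integrating factor
  set E : ℝ → ℝ := fun t => Real.exp (2 * s * m t) with hE
  have hEd : ∀ t ∈ Icc (-1:ℝ) 1, HasDerivAt E (E t * (2 * s * m' t)) t := by
    intro t ht
    exact ((hm t ht).const_mul (2*s)).exp
  have hψd : ∀ t ∈ Icc (-1:ℝ) 1,
      HasDerivAt (fun t => E t * φ' t) (E t * ((c t - lam) * φ t)) t := by
    intro t ht
    have h : HasDerivAt (fun t => E t * φ' t) (E t * (2 * s * m' t) * φ' t + E t * φ'' t) t :=
      (hEd t ht).mul (hφ' t ht)
    have hodet := hode t ht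
    convert h using 1
    have hφ''eq : φ'' t = c t * φ t - lam * φ t - 2 * s * m' t * φ' t := by linarith
    rw [hφ''eq]; ring
  -- continuity facts
  have hmc : ContinuousOn m (Icc (-1:ℝ) 1) :=
    fun t ht => (hm t ht).continuousAt.continuousWithinAt
  have hφc : ContinuousOn φ (Icc (-1:ℝ) 1) :=
    fun t ht => (hφ t ht).continuousAt.continuousWithinAt
  have hEc : ContinuousOn E (Icc (-1:ℝ) 1) :=
    Real.continuous_exp.comp_continuousOn (continuousOn_const.mul hmc)
  have hgcont : ContinuousOn (fun t => E t * ((c t - lam) * φ t)) (Icc (-1:ℝ) 1) :=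
    hEc.mul ((hc.sub continuousOn_const).mul hφc)
  have hgint : IntervalIntegrable (fun t => E t * ((c t - lam) * φ t)) MeasureTheory.volume (-1) x :=
    ContinuousOn.intervalIntegrable (by rw [huIcc]; exact hgcont.mono hsubx)
  -- FTC
  have hFTC : ∫ t in (-1:ℝ)..x, E t * ((c t - lam) * φ t) = E x * φ' x := by
    rw [intervalIntegral.integral_eq_sub_of_hasDerivAt
      (fun t ht => hψd t (hsubx (huIcc ▸ ht))) hgint, hNeu₁]
    ring
  -- monotonicity of m t - μ t on Icc (-1) a
  have hdh : ∀ t ∈ Icc (-1:ℝ) 1, HasDerivAt (fun t => m t - μ * t) (m' t - μ) t := by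
    intro t ht
    exact ((hm t ht).sub ((hasDerivAt_id t).const_mul μ)).congr_deriv (by simp)
  have hmono : MonotoneOn (fun t => m t - μ * t) (Icc (-1:ℝ) a) := by
    apply monotoneOn_of_hasDerivWithinAt_nonneg (convex_Icc _ _)
      (fun t ht => (hdh t (hsub ht)).continuousAt.continuousWithinAt)
      (fun t ht => ((hdh t (hsub (interior_subset ht))).hasDerivWithinAt))
    intro t ht
    have : μ ≤ m' t := hμ.2 ⟨t, interior_subset ht, rfl⟩
    linarith
  -- pointwise bound on the integrand
  have hptw : ∀ t ∈ Icc (-1:ℝ) x, |E t * ((c t - lam) * φ t)|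
      ≤ (2 * C * E x) * Real.exp (2 * s * μ * (t - x)) := by
    intro t ht
    have ht1 : t ∈ Icc (-1:ℝ) 1 := hsubx ht
    have hta : t ∈ Icc (-1:ℝ) a := ⟨ht.1, le_trans ht.2 hx.2⟩
    have hclam : |c t - lam| ≤ 2 * C := by
      have h1 := abs_le.1 (hCb t ht1)
      have h2 := abs_le.1 hlamC
      rw [abs_le]
      constructor <;> [linarith; linarith]
    have hφt := hφ01 t ht1
    have hEt : E t ≤ E x * Real.exp (2 * s * μ * (t - x)) := by
      rw [hE, ← Real.exp_add]
      apply Real.exp_le_exp.2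
      have hmm : m t - μ * t ≤ m x - μ * x := hmono hta hx ht.2
      nlinarith [mul_le_mul_of_nonneg_left hmm (by positivity : (0:ℝ) ≤ 2*s)]
    have habs : |(c t - lam) * φ t| ≤ 2 * C := by
      rw [abs_mul, abs_of_pos hφt.1]
      nlinarith [abs_nonneg (c t - lam), hφt.1, hφt.2]
    calc |E t * ((c t - lam) * φ t)| = E t * |(c t - lam) * φ t| := by
          rw [abs_mul, abs_of_pos (Real.exp_pos _)]
      _ ≤ (E x * Real.exp (2 * s * μ * (t - x))) * (2 * C) := by
          apply mul_le_mul hEt habs (abs_nonneg _)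
          positivity
      _ = (2 * C * E x) * Real.exp (2 * s * μ * (t - x)) := by ring
  -- the comparison integral
  have hRHScont : Continuous (fun t => (2 * C * E x) * Real.exp (2 * s * μ * (t - x))) :=
    continuous_const.mul
      (Real.continuous_exp.comp (continuous_const.mul (continuous_id.sub continuous_const)))
  have hcomp : ∫ t in (-1:ℝ)..x, (2 * C * E x) * Real.exp (2 * s * μ * (t - x))
      = (2 * C * E x) * ((1 - Real.exp (-(2*s*μ) * (x + 1))) / (2*s*μ)) := by
    have hF : ∀ t ∈ uIcc (-1:ℝ) x, HasDerivAt
        (fun t => (2 * C * E x) * (Real.exp (2 * s * μ * (t - x)) / (2*s*μ)))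
        ((2 * C * E x) * Real.exp (2 * s * μ * (t - x))) t := by
      intro t _
      have h1 : HasDerivAt (fun t => 2 * s * μ * (t - x)) (2*s*μ) t := by
        simpa using ((hasDerivAt_id t).sub_const x).const_mul (2*s*μ)
      have h2 : HasDerivAt (fun t => (2 * C * E x) * (Real.exp (2 * s * μ * (t - x)) / (2*s*μ)))
          ((2 * C * E x) * (Real.exp (2 * s * μ * (t - x)) * (2*s*μ) / (2*s*μ))) t :=
        ((h1.exp).div_const (2*s*μ)).const_mul (2 * C * E x)
      convert h2 using 1
      have hμs : (2*s*μ) ≠ 0 := by positivity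
      field_simp
    rw [intervalIntegral.integral_eq_sub_of_hasDerivAt hF
      (hRHScont.intervalIntegrable _ _)]
    have hμs : (2*s*μ) ≠ 0 := by positivity
    rw [show (2 : ℝ) * s * μ * (x - x) = 0 by ring, Real.exp_zero,
      show (2 : ℝ) * s * μ * (-1 - x) = -(2*s*μ) * (x + 1) by ring]
    field_simp
  -- put it together
  have hInt : E x * |φ' x| ≤ (2 * C * E x) * ((1 - Real.exp (-(2*s*μ) * (x + 1))) / (2*s*μ)) := by
    have h0 : E x * |φ' x| = |∫ t in (-1:ℝ)..x, E t * ((c t - lam) * φ t)| := by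
      rw [hFTC, abs_mul, abs_of_pos (Real.exp_pos _)]
    rw [h0, ← hcomp]
    calc |∫ t in (-1:ℝ)..x, E t * ((c t - lam) * φ t)|
        ≤ ∫ t in (-1:ℝ)..x, |E t * ((c t - lam) * φ t)| := by
          exact intervalIntegral.abs_integral_le_integral_abs hxle
      _ ≤ ∫ t in (-1:ℝ)..x, (2 * C * E x) * Real.exp (2 * s * μ * (t - x)) := by
          apply intervalIntegral.integral_mono_on hxle hgint.abs
            (hRHScont.intervalIntegrable _ _) hptw
  have hEx : (0:ℝ) < E x := Real.exp_pos _
  have hmain : |φ' x| ≤ 2 * C * ((1 - Real.exp (-(2*s*μ) * (x + 1))) / (2*s*μ)) := by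
    have h := hInt
    rw [show (2 * C * E x) * ((1 - Real.exp (-(2*s*μ) * (x + 1))) / (2*s*μ))
        = E x * (2 * C * ((1 - Real.exp (-(2*s*μ) * (x + 1))) / (2*s*μ))) by ring] at h
    exact le_of_mul_le_mul_left h hEx
  -- final monotone step in x
  have hexp : Real.exp (-(2*s*μ) * (a + 1)) ≤ Real.exp (-(2*s*μ) * (x + 1)) := by
    apply Real.exp_le_exp.2
    nlinarith [mul_nonneg (by positivity : (0:ℝ) ≤ 2*s*μ) (by linarith [hx.2] : (0:ℝ) ≤ a - x)]
  calc |φ' x| ≤ 2 * C * ((1 - Real.exp (-(2*s*μ) * (x + 1))) / (2*s*μ)) := hmain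
    _ ≤ 2 * C * ((1 - Real.exp (-(2*s*μ) * (a + 1))) / (2*s*μ)) := by
        apply mul_le_mul_of_nonneg_left _ (by linarith)
        apply div_le_div_of_nonneg_right _ (by positivity)
        linarith
    _ = (C / μ) * ((1 - Real.exp (-2 * s * μ * (a + 1))) / s) := by
        rw [show -(2*s*μ) * (a + 1) = -2 * s * μ * (a + 1) by ring]
        field_simp
end

section
/- Let m ∈ C¹([-1,1]) with m' ≥ 0 on [-1, x₀] for some x₀ ∈ (-1,1), let φ be a positive C² solution of -φ'' - 2s·m'·φ' + c·φ = λ·φ on [-1,1] with 0 < φ ≤ 1, s > 0, let -1 ≤ p < q ≤ x₀, and suppose φ'(p) = 0 (or more generally |φ'(p)| ≤ ε/2) and q - p ≤ ε/(4‖c‖_∞) with λ ∈ [-‖c‖_∞, ‖c‖_∞]. Then |φ'(x)| < ε for all x ∈ [p, q]. -/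
open Set Real

theorem stmt14 (φ φ' φ'' m m' c : ℝ → ℝ) (s lam x₀ p q ε C : ℝ)
    (hφ : ∀ x ∈ Icc (-1:ℝ) 1, HasDerivAt φ (φ' x) x)
    (hφ' : ∀ x ∈ Icc (-1:ℝ) 1, HasDerivAt φ' (φ'' x) x)
    (hφ''c : ContinuousOn φ'' (Icc (-1:ℝ) 1))
    (hm : ∀ x ∈ Icc (-1:ℝ) 1, HasDerivAt m (m' x) x)
    (hm'c : ContinuousOn m' (Icc (-1:ℝ) 1))
    (hc : ContinuousOn c (Icc (-1:ℝ) 1))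
    (hφ01 : ∀ x ∈ Icc (-1:ℝ) 1, 0 < φ x ∧ φ x ≤ 1)
    (hode : ∀ x ∈ Icc (-1:ℝ) 1,
      -φ'' x - 2 * s * m' x * φ' x + c x * φ x = lam * φ x)
    (hx₀ : x₀ ∈ Ioo (-1:ℝ) 1)
    (hm'nonneg : ∀ x ∈ Icc (-1:ℝ) x₀, 0 ≤ m' x)
    (hs : 0 < s) (hε : 0 < ε)
    (hC : IsLUB ((fun x => |c x|) '' Icc (-1:ℝ) 1) C)
    (hlam : |lam| ≤ C)
    (hp : -1 ≤ p) (hpq : p < q) (hq : q ≤ x₀)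
    (hφ'p : |φ' p| ≤ ε / 2)
    (hlen : q - p ≤ ε / (4 * C)) :
    ∀ x ∈ Icc p q, |φ' x| < ε := by
  have hcb : ∀ t ∈ Icc (-1:ℝ) 1, |c t| ≤ C := fun t ht => hC.1 ⟨t, ht, rfl⟩
  have hC0 : 0 ≤ C := (abs_nonneg (c (-1))).trans (hcb (-1) (by norm_num))
  have hCpos : 0 < C := by
    rcases hC0.lt_or_eq with h | h
    · exact h
    · exfalso
      rw [← h] at hlen
      norm_num at hlen
      linarith
  intro x hx
  have hq1 : q ≤ 1 := hq.trans hx₀.2.le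
  have hsub1 : Icc p x ⊆ Icc (-1:ℝ) 1 := fun t ht =>
    ⟨hp.trans ht.1, ht.2.trans (hx.2.trans hq1)⟩
  have hsub0 : Icc p x ⊆ Icc (-1:ℝ) x₀ := fun t ht =>
    ⟨hp.trans ht.1, ht.2.trans (hx.2.trans hq)⟩
  have hx1 : x ∈ Icc (-1:ℝ) 1 := hsub1 (right_mem_Icc.2 hx.1)
  rcases eq_or_lt_of_le hx.1 with hpx | hpx
  · rw [← hpx]; linarith
  by_cases hone : ∃ t₀ ∈ Icc p x, φ t₀ < 1
  swap
  · -- φ ≡ 1 on [p, x], hence φ' x = 0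
    push_neg at hone
    have hone' : ∀ t ∈ Icc p x, φ t = 1 :=
      fun t ht => le_antisymm (hφ01 t (hsub1 ht)).2 (hone t ht)
    have hzero : ∀ t ∈ Ioo p x, φ' t = 0 := by
      intro t ht
      have hnb : Ioo p x ∈ nhds t := Ioo_mem_nhds ht.1 ht.2
      have heq : φ =ᶠ[nhds t] (fun _ => (1:ℝ)) :=
        Filter.eventuallyEq_of_mem hnb (fun y hy => hone' y (Ioo_subset_Icc_self hy))
      have h1 : HasDerivAt (fun _ => (1:ℝ)) (φ' t) t :=
        (hφ t (hsub1 (Ioo_subset_Icc_self ht))).congr_of_eventuallyEq heq.symm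
      exact h1.unique (hasDerivAt_const t 1)
    have hxcl : x ∈ closure (Ioo p x) := by
      rw [closure_Ioo hpx.ne]
      exact right_mem_Icc.2 hpx.le
    have hnebot : (nhdsWithin x (Ioo p x)).NeBot :=
      mem_closure_iff_nhdsWithin_neBot.mp hxcl
    have ht1 : Filter.Tendsto φ' (nhdsWithin x (Ioo p x)) (nhds (φ' x)) :=
      ((hφ' x hx1).continuousAt).continuousWithinAt
    have ht2 : Filter.Tendsto φ' (nhdsWithin x (Ioo p x)) (nhds 0) := by
      apply Filter.Tendsto.congr' _ tendsto_const_nhds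
      exact Filter.eventuallyEq_of_mem self_mem_nhdsWithin (fun y hy => (hzero y hy).symm)
    have : φ' x = 0 := tendsto_nhds_unique ht1 ht2
    rw [this]; simpa using hε
  -- main case: ∃ t₀ ∈ [p,x], φ t₀ < 1
  obtain ⟨t₀, ht₀, ht₀lt⟩ := hone
  -- m is monotone on [p, x]
  have hmmono : MonotoneOn m (Icc p x) := by
    apply monotoneOn_of_deriv_nonneg (convex_Icc p x)
      (fun t ht => ((hm t (hsub1 ht)).continuousAt).continuousWithinAt)
    · intro t ht
      rw [interior_Icc] at ht
      exact ((hm t (hsub1 (Ioo_subset_Icc_self ht))).differentiableAt).differentiableWithinAt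
    · intro t ht
      rw [interior_Icc] at ht
      rw [(hm t (hsub1 (Ioo_subset_Icc_self ht))).deriv]
      exact hm'nonneg t (hsub0 (Ioo_subset_Icc_self ht))
  have hmle : ∀ t ∈ Icc p x, m t ≤ m x := fun t ht =>
    hmmono ht (right_mem_Icc.2 hx.1) ht.2
  set g : ℝ → ℝ := fun t => (c t - lam) * φ t * Real.exp (2 * s * m t) with hg
  have hφcont : ContinuousOn φ (Icc (-1:ℝ) 1) :=
    fun t ht => ((hφ t ht).continuousAt).continuousWithinAt
  have hmcont : ContinuousOn m (Icc (-1:ℝ) 1) :=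
    fun t ht => ((hm t ht).continuousAt).continuousWithinAt
  have hgcont : ContinuousOn g (Icc (-1:ℝ) 1) := by
    apply ContinuousOn.mul
    · exact (hc.sub continuousOn_const).mul hφcont
    · exact Real.continuous_exp.comp_continuousOn (hmcont.const_smul (2*s))
  have hexppos : ∀ y : ℝ, 0 < Real.exp (2 * s * m y) := fun y => Real.exp_pos _
  -- FTC
  have key : ∫ t in p..x, g t
      = φ' x * Real.exp (2 * s * m x) - φ' p * Real.exp (2 * s * m p) := by
    apply intervalIntegral.integral_eq_sub_of_hasDerivAt
    · intro t ht
      rw [uIcc_of_le hx.1] at ht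
      have ht1 : t ∈ Icc (-1:ℝ) 1 := hsub1 ht
      have hD : HasDerivAt (fun y => φ' y * Real.exp (2 * s * m y))
          (φ'' t * Real.exp (2 * s * m t)
            + φ' t * (Real.exp (2 * s * m t) * (2 * s * m' t))) t :=
        (hφ' t ht1).mul (((hm t ht1).const_mul (2*s)).exp)
      refine hD.congr_deriv ?_
      have h : φ'' t = (c t - lam) * φ t - 2 * s * m' t * φ' t := by
        have := hode t ht1; linarith
      simp only [hg]; rw [h]; ring
    · exact (hgcont.mono (by rw [uIcc_of_le hx.1]; exact hsub1)).intervalIntegrable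
  -- pointwise bounds on |g|
  have haux : ∀ t ∈ Icc p x, |g t| ≤ 2 * C * φ t * Real.exp (2 * s * m x) := by
    intro t ht
    have ht1 := hsub1 ht
    have hφt := hφ01 t ht1
    have h1 : |c t - lam| ≤ 2 * C := by
      have := hcb t ht1
      calc |c t - lam| ≤ |c t| + |lam| := abs_sub _ _
        _ ≤ 2 * C := by linarith
    have hexp : Real.exp (2 * s * m t) ≤ Real.exp (2 * s * m x) := by
      apply Real.exp_le_exp.2
      have := hmle t ht
      nlinarith
    rw [hg]
    simp only []
    rw [abs_mul, abs_mul, abs_of_pos hφt.1, abs_of_pos (hexppos t)]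
    apply mul_le_mul _ hexp (hexppos t).le (mul_nonneg (by positivity) hφt.1.le)
    exact mul_le_mul_of_nonneg_right h1 hφt.1.le
  have hgb : ∀ t ∈ Icc p x, |g t| ≤ 2 * C * Real.exp (2 * s * m x) := by
    intro t ht
    refine (haux t ht).trans ?_
    have hφt := hφ01 t (hsub1 ht)
    have h2 : 2 * C * φ t ≤ 2 * C * 1 := mul_le_mul_of_nonneg_left hφt.2 (by linarith)
    have := mul_le_mul_of_nonneg_right h2 (hexppos x).le
    linarith
  have hgabscont : ContinuousOn (fun t => |g t|) (Icc p x) := (hgcont.mono hsub1).abs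
  -- strict bound on the integral of |g|
  have hstrict : ∫ t in p..x, |g t| < (x - p) * (2 * C * Real.exp (2 * s * m x)) := by
    have h := intervalIntegral.integral_lt_integral_of_continuousOn_of_le_of_exists_lt
      (f := fun t => |g t|) (g := fun _ => 2 * C * Real.exp (2 * s * m x)) hpx
      hgabscont continuousOn_const
      (fun t ht => hgb t (Ioc_subset_Icc_self ht))
      ⟨t₀, ht₀, by
        refine (haux t₀ ht₀).trans_lt ?_
        have hφt := hφ01 t₀ (hsub1 ht₀)
        have h2 : 2 * C * φ t₀ < 2 * C * 1 := by
          apply mul_lt_mul_of_pos_left ht₀lt (by linarith)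
        have := mul_lt_mul_of_pos_right h2 (hexppos x)
        linarith⟩
    rwa [intervalIntegral.integral_const, smul_eq_mul] at h
  -- put everything together
  have habs : |∫ t in p..x, g t| ≤ ∫ t in p..x, |g t| :=
    intervalIntegral.abs_integral_le_integral_abs hx.1
  have hexpp : Real.exp (2 * s * m p) ≤ Real.exp (2 * s * m x) := by
    apply Real.exp_le_exp.2
    have := hmle p (left_mem_Icc.2 hx.1)
    nlinarith
  have hlen' : (x - p) * (2 * C) ≤ ε / 2 := by
    have h1 : x - p ≤ ε / (4 * C) := le_trans (by linarith [hx.2]) hlen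
    have h2 : (x - p) * (2 * C) ≤ (ε / (4 * C)) * (2 * C) := by nlinarith
    calc (x - p) * (2 * C) ≤ (ε / (4 * C)) * (2 * C) := h2
      _ = ε / 2 := by field_simp; ring
  have hmain : |φ' x| * Real.exp (2 * s * m x) < ε * Real.exp (2 * s * m x) := by
    have h1 : φ' x * Real.exp (2 * s * m x)
        = φ' p * Real.exp (2 * s * m p) + ∫ t in p..x, g t := by linarith [key]
    calc |φ' x| * Real.exp (2 * s * m x)
        = |φ' x * Real.exp (2 * s * m x)| := by
          rw [abs_mul, abs_of_pos (hexppos x)]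
      _ = |φ' p * Real.exp (2 * s * m p) + ∫ t in p..x, g t| := by rw [h1]
      _ ≤ |φ' p| * Real.exp (2 * s * m p) + |∫ t in p..x, g t| := by
          refine (abs_add_le _ _).trans ?_
          rw [abs_mul, abs_of_pos (hexppos p)]
      _ ≤ (ε / 2) * Real.exp (2 * s * m x) + ∫ t in p..x, |g t| := by
          have : |φ' p| * Real.exp (2 * s * m p) ≤ (ε / 2) * Real.exp (2 * s * m x) := by
            have := abs_nonneg (φ' p)
            nlinarith [hexppos p]
          linarith
      _ < (ε / 2) * Real.exp (2 * s * m x)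
            + (x - p) * (2 * C * Real.exp (2 * s * m x)) := by linarith
      _ ≤ ε * Real.exp (2 * s * m x) := by nlinarith [hexppos x]
  exact lt_of_mul_lt_mul_right hmain (hexppos x).le
end
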